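/- For q > 1 and 0 ≤ r < 1, ∫_0^{2π} (1 + r² - 2r cos s)^{q-1} ds ≤ 2^{q-1} ∫_0^{2π} (1 - cos s)^{q-1} ds. -/

import Mathlib

/-!
The function `G w = (1 - w) ^ (2 * (q - 1))` is holomorphic on the unit disc and continuous up to
its boundary, and `‖G (r * exp (s * I))‖ = (1 + r ^ 2 - 2 * r * cos s) ^ (q - 1)`; on the unit
circle this is `2 ^ (q - 1) * (1 - cos s) ^ (q - 1)`. So the claim is that circle means of `‖G‖`
grow with the radius. By the Poisson formula, `‖G w‖` is at most the Poisson average of `‖G‖` over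
the unit circle. Averaging this over `‖w‖ = r` and exchanging the integrals gives the claim, since
`P(r * exp (s * I), exp (t * I))` is symmetric in `s` and `t` and so also has mean one in `s`.
-/

open Real intervalIntegral Complex Metric Set MeasureTheory Function

lemma norm_circleMap_sub_circleMap_sq (c : ℂ) (R r a b : ℝ) :
    ‖circleMap c R a - circleMap c r b‖ ^ 2 = R ^ 2 + r ^ 2 - 2 * R * r * Real.cos (a - b) := by
  rw [← sub_sub_sub_cancel_right _ _ c, circleMap_sub_center, circleMap_sub_center,
    Complex.sq_norm, Complex.normSq_apply]
  simp only [Complex.sub_re, Complex.sub_im, circleMap_zero_re, circleMap_zero_im, Real.cos_sub]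
  nlinarith [Real.sin_sq_add_cos_sq a, Real.sin_sq_add_cos_sq b]

lemma norm_circleMap_sub_circleMap_comm (c : ℂ) (R r s t : ℝ) :
    ‖circleMap c R t - circleMap c r s‖ = ‖circleMap c R s - circleMap c r t‖ := by
  rw [← sq_eq_sq₀ (norm_nonneg _) (norm_nonneg _), norm_circleMap_sub_circleMap_sq,
    norm_circleMap_sub_circleMap_sq, ← Real.cos_neg, neg_sub]

lemma circleMap_mem_ball {c : ℂ} {r R : ℝ} (hr : |r| < R) (θ : ℝ) :
    circleMap c r θ ∈ ball c R := by
  rwa [mem_ball, dist_eq_norm, circleMap_sub_center, norm_circleMap_zero]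

lemma integral_le_integral_of_le_integral_kernel {a b : ℝ} (hab : a ≤ b) {g h : ℝ → ℝ}
    {K : ℝ → ℝ → ℝ} (hK : Continuous (uncurry K)) (hh : Continuous h)
    (hg : IntervalIntegrable g volume a b) (hgK : ∀ s ∈ Icc a b, g s ≤ ∫ t in a..b, K s t * h t)
    (hK_one : ∀ t ∈ Icc a b, ∫ s in a..b, K s t = 1) :
    ∫ s in a..b, g s ≤ ∫ t in a..b, h t := by
  have hKh : Continuous (uncurry fun s t ↦ K s t * h t) := hK.mul (hh.comp continuous_snd)
  calc ∫ s in a..b, g s ≤ ∫ s in a..b, ∫ t in a..b, K s t * h t :=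
        integral_mono_on hab hg
          ((continuous_parametric_intervalIntegral_of_continuous' hKh a b).intervalIntegrable a b)
          hgK
    _ = ∫ t in a..b, ∫ s in a..b, K s t * h t :=
        intervalIntegral_intervalIntegral_swap <|
          (hKh.continuousOn.integrableOn_compact (isCompact_uIcc.prod isCompact_uIcc)).mono_set
            (prod_mono uIoc_subset_uIcc uIoc_subset_uIcc)
    _ = ∫ t in a..b, h t := integral_congr fun t ht ↦ by
        rw [intervalIntegral.integral_mul_const, hK_one t (by rwa [uIcc_of_le hab] at ht), one_mul]

lemma poissonKernel_nonneg {c w z : ℂ} (h : ‖w - c‖ ≤ ‖z - c‖) : 0 ≤ poissonKernel c w z :=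
  div_nonneg (sub_nonneg.2 (pow_le_pow_left₀ (norm_nonneg _) h 2)) (sq_nonneg _)

lemma poissonKernel_circleMap_comm (c : ℂ) (r R s t : ℝ) :
    poissonKernel c (circleMap c r s) (circleMap c R t)
      = poissonKernel c (circleMap c r t) (circleMap c R s) := by
  simp only [poissonKernel_def, circleMap_sub_center, norm_circleMap_zero,
    norm_circleMap_sub_circleMap_comm 0 R r s t]

lemma continuous_poissonKernel_circleMap (c : ℂ) {r R : ℝ} (hr : |r| ≠ |R|) :
    Continuous fun p : ℝ × ℝ ↦ poissonKernel c (circleMap c r p.1) (circleMap c R p.2) := by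
  simp only [poissonKernel_def, circleMap_sub_center]
  refine Continuous.div (by fun_prop) (by fun_prop) fun p ↦ pow_ne_zero _ ?_
  rw [norm_ne_zero_iff, sub_ne_zero]
  intro h
  have := congrArg norm h
  rw [norm_circleMap_zero, norm_circleMap_zero] at this
  exact hr this.symm

lemma circleAverage_poissonKernel {c w : ℂ} {R : ℝ} (hw : w ∈ ball c R) :
    Real.circleAverage (poissonKernel c w) c R = 1 := by
  simpa [← Pi.one_def] using
    (InnerProductSpace.harmonicContOnCl_const (c := (1 : ℝ))).circleAverage_poissonKernel_smul hw

lemma circleAverage_poissonKernel_circleMap {c : ℂ} {r R : ℝ} (hr : |r| < R) (t : ℝ) :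
    Real.circleAverage (fun w ↦ poissonKernel c w (circleMap c R t)) c r = 1 := by
  simp only [circleAverage_def, poissonKernel_circleMap_comm c r R _ t]
  exact circleAverage_poissonKernel (circleMap_mem_ball hr t)

variable {E : Type*} [NormedAddCommGroup E] [NormedSpace ℂ E]

lemma norm_circleAverage_le {f : ℂ → E} {c : ℂ} {R : ℝ} :
    ‖Real.circleAverage f c R‖ ≤ Real.circleAverage (‖f ·‖) c R := by
  rw [circleAverage_def, circleAverage_def, norm_smul, smul_eq_mul,
    Real.norm_of_nonneg (by positivity)]
  gcongr
  exact norm_integral_le_integral_norm two_pi_pos.le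

variable [CompleteSpace E]

lemma DiffContOnCl.norm_le_circleAverage_poissonKernel_mul_norm {f : ℂ → E} {c w : ℂ} {R : ℝ}
    (hf : DiffContOnCl ℂ f (ball c R)) (hw : w ∈ ball c R) :
    ‖f w‖ ≤ Real.circleAverage (fun z ↦ poissonKernel c w z * ‖f z‖) c R := by
  rw [← hf.circleAverage_poissonKernel_smul hw]
  refine norm_circleAverage_le.trans_eq (circleAverage_congr_sphere fun z hz ↦ ?_)
  have hwz : ‖w - c‖ ≤ ‖z - c‖ := by
    rw [mem_sphere_iff_norm.1 hz]
    exact (mem_ball_iff_norm.1 hw).le.trans (le_abs_self R)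
  simp [norm_smul, abs_of_nonneg (poissonKernel_nonneg hwz)]

theorem DiffContOnCl.circleAverage_norm_le {f : ℂ → E} {c : ℂ} {r R : ℝ}
    (hf : DiffContOnCl ℂ f (ball c R)) (hr : |r| < R) :
    Real.circleAverage (‖f ·‖) c r ≤ Real.circleAverage (‖f ·‖) c R := by
  have hR : 0 < R := (abs_nonneg r).trans_lt hr
  have hcont : ∀ ρ, |ρ| ≤ R → Continuous fun θ ↦ ‖f (circleMap c ρ θ)‖ := fun ρ hρ ↦
    (hf.continuousOn.comp_continuous (continuous_circleMap c ρ) fun θ ↦ by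
      rw [closure_ball c hR.ne', mem_closedBall, dist_eq_norm, circleMap_sub_center,
        norm_circleMap_zero]
      exact hρ).norm
  rw [circleAverage_def, circleAverage_def, smul_eq_mul, smul_eq_mul]
  gcongr
  refine integral_le_integral_of_le_integral_kernel two_pi_pos.le
    (K := fun s t ↦ (2 * π)⁻¹ * poissonKernel c (circleMap c r s) (circleMap c R t))
    (continuous_const.mul (continuous_poissonKernel_circleMap c (by rw [abs_of_pos hR]; exact hr.ne)))
    (hcont R (abs_of_pos hR).le) ((hcont r hr.le).intervalIntegrable _ _)
    (fun s _ ↦ ?_) (fun t _ ↦ ?_)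
  · have := hf.norm_le_circleAverage_poissonKernel_mul_norm (circleMap_mem_ball hr s)
    rw [circleAverage_def, smul_eq_mul, ← intervalIntegral.integral_const_mul] at this
    simpa only [mul_assoc] using this
  · rw [intervalIntegral.integral_const_mul, ← smul_eq_mul]
    exact circleAverage_poissonKernel_circleMap hr t

lemma diffContOnCl_one_sub_cpow {α : ℂ} (hα : 0 < α.re) :
    DiffContOnCl ℂ (fun w : ℂ ↦ (1 - w) ^ α) (ball 0 1) := by
  refine ⟨fun w hw ↦ ?_, fun w hw ↦ ?_⟩
  · have hw : w.re < 1 := (re_le_norm w).trans_lt (by simpa using hw)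
    refine (((differentiableAt_const _).sub differentiableAt_id).cpow_const ?_).differentiableWithinAt
    exact mem_slitPlane_iff.2 (Or.inl (by simpa using hw))
  · rw [closure_ball 0 one_ne_zero] at hw
    have hw : w.re ≤ 1 := (re_le_norm w).trans (by simpa using hw)
    exact ((continuousAt_cpow_const_of_re_pos (Or.inl (by simpa using hw)) hα).comp
      (by fun_prop)).continuousWithinAt

lemma norm_one_sub_circleMap_cpow (ρ p s : ℝ) :
    ‖(1 - circleMap 0 ρ s) ^ ((2 * p : ℝ) : ℂ)‖ = (1 + ρ ^ 2 - 2 * ρ * Real.cos s) ^ p := by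
  have h := norm_circleMap_sub_circleMap_sq 0 1 ρ 0 s
  rw [circleMap_zero 1 0] at h
  simp only [ofReal_one, ofReal_zero, zero_mul, Complex.exp_zero, mul_one, one_pow, zero_sub,
    Real.cos_neg] at h
  rw [norm_cpow_real, Real.rpow_mul (norm_nonneg _), Real.rpow_two, h]

theorem integral_power_bound (r q : ℝ) (hr0 : 0 ≤ r) (hr1 : r < 1) (hq : 1 < q) :
    (∫ s in (0:ℝ)..(2 * π), (1 + r ^ 2 - 2 * r * Real.cos s) ^ (q - 1)) ≤
      2 ^ (q - 1) * ∫ s in (0:ℝ)..(2 * π), (1 - Real.cos s) ^ (q - 1) := by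
  have hG := diffContOnCl_one_sub_cpow (α := ((2 * (q - 1) : ℝ) : ℂ))
    (by rw [ofReal_re]; linarith)
  have key := hG.circleAverage_norm_le (r := r) (by rwa [abs_of_nonneg hr0])
  simp only [circleAverage_def, smul_eq_mul, norm_one_sub_circleMap_cpow] at key
  refine (le_of_mul_le_mul_left key (by positivity)).trans_eq ?_
  rw [← intervalIntegral.integral_const_mul]
  refine integral_congr fun s _ ↦ ?_
  rw [← Real.mul_rpow zero_le_two (by linarith [Real.cos_le_one s])]
  congr 1
  ring
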